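/- arXiv:1901.05048 — 2 statements merged into one kernel-verified Lean document; each statement's English description precedes it below -/
import Mathlib

section
/- Fix 1 ≤ α ≤ m. Define a_α := −e^{−φ}·(∂_α ∂_v̄ φ) : U → ℂ (the coefficient of the horizontal lift δ/δz^α) and A_{αv̄v̄} := e^{φ}·(∂_v̄ a_α) : U → ℂ. Then ∂_v A_{αv̄v̄} = 0 at every point of U. (This is Lemma 1.3(i) of the paper, due to Schumacher: the Kodaira–Spencer representative A_{αv̄v̄} = φ_{vv̄}·∂_v̄(−φ^{vv̄}φ_{αv̄}) is fiberwise holomorphic in v, hence harmonic.) -/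
/-- Wirtinger derivative in the base direction: for F on ℂᵐ × ℂ,
∂_α F(p) := (1/2)·(DF(p)[(e_α,0)] − i·DF(p)[(i·e_α,0)]). -/
noncomputable def dZ {m : ℕ} (α : Fin m) (F : ((Fin m → ℂ) × ℂ) → ℂ)
    (p : (Fin m → ℂ) × ℂ) : ℂ :=
  (1 / 2 : ℂ) * (fderiv ℝ F p (Pi.single α 1, 0) -
    Complex.I * fderiv ℝ F p (Pi.single α Complex.I, 0))

/-- Conjugate Wirtinger derivative in the base direction:
∂_ᾱ F(p) := (1/2)·(DF(p)[(e_α,0)] + i·DF(p)[(i·e_α,0)]). -/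
noncomputable def dZbar {m : ℕ} (α : Fin m) (F : ((Fin m → ℂ) × ℂ) → ℂ)
    (p : (Fin m → ℂ) × ℂ) : ℂ :=
  (1 / 2 : ℂ) * (fderiv ℝ F p (Pi.single α 1, 0) +
    Complex.I * fderiv ℝ F p (Pi.single α Complex.I, 0))

/-- Wirtinger derivative in the fiber direction:
∂_v F(p) := (1/2)·(DF(p)[(0,1)] − i·DF(p)[(0,i)]). -/
noncomputable def dV {m : ℕ} (F : ((Fin m → ℂ) × ℂ) → ℂ) (p : (Fin m → ℂ) × ℂ) : ℂ :=
  (1 / 2 : ℂ) * (fderiv ℝ F p (0, 1) - Complex.I * fderiv ℝ F p (0, Complex.I))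

/-- Conjugate Wirtinger derivative in the fiber direction:
∂_v̄ F(p) := (1/2)·(DF(p)[(0,1)] + i·DF(p)[(0,i)]). -/
noncomputable def dVbar {m : ℕ} (F : ((Fin m → ℂ) × ℂ) → ℂ) (p : (Fin m → ℂ) × ℂ) : ℂ :=
  (1 / 2 : ℂ) * (fderiv ℝ F p (0, 1) + Complex.I * fderiv ℝ F p (0, Complex.I))



open Complex Filter

section wdlemmas

variable {E : Type*} [NormedAddCommGroup E] [NormedSpace ℝ E]

noncomputable def wd (s : ℂ) (w1 w2 : E) (F : E → ℂ) (p : E) : ℂ :=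
  (1 / 2 : ℂ) * (fderiv ℝ F p w1 + s * fderiv ℝ F p w2)

lemma wd_congr {s : ℂ} {w1 w2 : E} {F G : E → ℂ} {p : E} (h : F =ᶠ[nhds p] G) :
    wd s w1 w2 F p = wd s w1 w2 G p := by
  rw [wd, wd, h.fderiv_eq]

lemma wd_mul {s : ℂ} {w1 w2 : E} {F G : E → ℂ} {p : E}
    (hF : DifferentiableAt ℝ F p) (hG : DifferentiableAt ℝ G p) :
    wd s w1 w2 (fun q => F q * G q) p = wd s w1 w2 F p * G p + F p * wd s w1 w2 G p := by
  have h := fderiv_fun_mul hF hG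
  simp only [wd, h, ContinuousLinearMap.add_apply, ContinuousLinearMap.coe_smul',
    Pi.smul_apply, smul_eq_mul]
  ring

lemma wd_exp {s : ℂ} {w1 w2 : E} {F : E → ℂ} {p : E} (hF : DifferentiableAt ℝ F p) :
    wd s w1 w2 (fun q => Complex.exp (F q)) p = Complex.exp (F p) * wd s w1 w2 F p := by
  have h := (hF.hasFDerivAt.cexp).fderiv
  simp only [wd, h, ContinuousLinearMap.coe_smul', Pi.smul_apply, smul_eq_mul]
  ring

lemma wd_neg {s : ℂ} {w1 w2 : E} {F : E → ℂ} {p : E} :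
    wd s w1 w2 (fun q => -F q) p = -wd s w1 w2 F p := by
  simp only [wd, fderiv_fun_neg, ContinuousLinearMap.neg_apply]
  ring

lemma wd_sub {s : ℂ} {w1 w2 : E} {F G : E → ℂ} {p : E}
    (hF : DifferentiableAt ℝ F p) (hG : DifferentiableAt ℝ G p) :
    wd s w1 w2 (fun q => F q - G q) p = wd s w1 w2 F p - wd s w1 w2 G p := by
  simp only [wd, fderiv_fun_sub hF hG, ContinuousLinearMap.sub_apply]
  ring

variable {U : Set E}

lemma diffAt_of_smooth (hU : IsOpen U) {F : E → ℂ} (hF : ContDiffOn ℝ (⊤ : ℕ∞) F U) {p : E} (hp : p ∈ U) :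
    DifferentiableAt ℝ F p :=
  ((hF.contDiffAt (hU.mem_nhds hp)).differentiableAt (by simp))

lemma contDiffOn_wd (hU : IsOpen U) {s : ℂ} {w1 w2 : E} {F : E → ℂ} (hF : ContDiffOn ℝ (⊤ : ℕ∞) F U) :
    ContDiffOn ℝ (⊤ : ℕ∞) (wd s w1 w2 F) U := by
  have h1 : ContDiffOn ℝ (⊤ : ℕ∞) (fderiv ℝ F) U := by
    apply hF.fderiv_of_isOpen hU
    exact le_of_eq (by rfl)
  have h2 : ∀ w : E, ContDiffOn ℝ (⊤ : ℕ∞) (fun p => fderiv ℝ F p w) U := fun w =>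
    (ContinuousLinearMap.apply ℝ ℂ w).contDiff.comp_contDiffOn h1
  exact contDiffOn_const.mul ((h2 w1).add (contDiffOn_const.mul (h2 w2)))

lemma D_comm (hU : IsOpen U) {F : E → ℂ} (hF : ContDiffOn ℝ (⊤ : ℕ∞) F U) {p : E} (hp : p ∈ U) (w w' : E) :
    fderiv ℝ (fun q => fderiv ℝ F q w') p w = fderiv ℝ (fun q => fderiv ℝ F q w) p w' := by
  have hf' : ContDiffOn ℝ (⊤ : ℕ∞) (fderiv ℝ F) U :=
    hF.fderiv_of_isOpen hU (le_of_eq (by rfl))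
  have hdiff : DifferentiableAt ℝ (fderiv ℝ F) p :=
    ((hf'.contDiffAt (hU.mem_nhds hp)).differentiableAt (by simp))
  have hev : ∀ᶠ q in nhds p, HasFDerivAt F (fderiv ℝ F q) q := by
    filter_upwards [hU.mem_nhds hp] with q hq
    exact (diffAt_of_smooth hU hF hq).hasFDerivAt
  have hsym := second_derivative_symmetric_of_eventually hev hdiff.hasFDerivAt w w'
  have key : ∀ v : E, fderiv ℝ (fun q => fderiv ℝ F q v) p
      = (ContinuousLinearMap.apply ℝ ℂ v).comp (fderiv ℝ (fderiv ℝ F) p) := fun v =>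
    ((ContinuousLinearMap.apply ℝ ℂ v).hasFDerivAt.comp p hdiff.hasFDerivAt).fderiv
  rw [key w', key w]
  exact hsym

lemma fderiv_wd_apply (hU : IsOpen U) {t : ℂ} {u1 u2 : E} {F : E → ℂ} (hF : ContDiffOn ℝ (⊤ : ℕ∞) F U)
    {p : E} (hp : p ∈ U) (w : E) :
    fderiv ℝ (wd t u1 u2 F) p w = (1 / 2 : ℂ) * (fderiv ℝ (fun q => fderiv ℝ F q u1) p w
      + t * fderiv ℝ (fun q => fderiv ℝ F q u2) p w) := by
  have hf' : ContDiffOn ℝ (⊤ : ℕ∞) (fderiv ℝ F) U :=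
    hF.fderiv_of_isOpen hU (le_of_eq (by rfl))
  have h2 : ∀ v : E, DifferentiableAt ℝ (fun q => fderiv ℝ F q v) p := fun v =>
    diffAt_of_smooth hU ((ContinuousLinearMap.apply ℝ ℂ v).contDiff.comp_contDiffOn hf') hp
  have : wd t u1 u2 F = fun q => (1 / 2 : ℂ) *
      ((fun q => fderiv ℝ F q u1) q + t * (fun q => fderiv ℝ F q u2) q) := rfl
  rw [this, fderiv_const_mul (show DifferentiableAt ℝ (fun q => (fun q => fderiv ℝ F q u1) q + t * (fun q => fderiv ℝ F q u2) q) p from (h2 u1).add ((h2 u2).const_mul t)),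
    fderiv_fun_add (h2 u1) ((h2 u2).const_mul t), fderiv_const_mul (h2 u2)]
  simp
  ring

lemma wd_comm (hU : IsOpen U) {s t : ℂ} {w1 w2 u1 u2 : E} {F : E → ℂ}
    (hF : ContDiffOn ℝ (⊤ : ℕ∞) F U) {p : E} (hp : p ∈ U) :
    wd s w1 w2 (wd t u1 u2 F) p = wd t u1 u2 (wd s w1 w2 F) p := by
  rw [wd, wd, fderiv_wd_apply hU hF hp w1, fderiv_wd_apply hU hF hp w2,
    fderiv_wd_apply hU hF hp u1, fderiv_wd_apply hU hF hp u2,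
    D_comm hU hF hp w1 u1, D_comm hU hF hp w1 u2, D_comm hU hF hp w2 u1,
    D_comm hU hF hp w2 u2]
  ring

end wdlemmas

/-- Lemma 1.3(i) (Schumacher): with a_α := −e^{−φ}·(∂_α ∂_v̄ φ) and
A_{αv̄v̄} := e^{φ}·(∂_v̄ a_α), one has ∂_v A_{αv̄v̄} = 0 on U. -/
theorem kodaira_spencer_rep_fiberwise_holomorphic {m : ℕ}
    (U : Set ((Fin m → ℂ) × ℂ)) (hU : IsOpen U)
    (φ : ((Fin m → ℂ) × ℂ) → ℝ) (hφ : ContDiffOn ℝ (⊤ : ℕ∞) φ U)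
    (hhyp : ∀ p ∈ U, dV (dVbar (fun q => ((φ q : ℝ) : ℂ))) p = Complex.exp (φ p))
    (α : Fin m)
    (aα : ((Fin m → ℂ) × ℂ) → ℂ)
    (haα : aα = fun p => -Complex.exp (-(φ p)) * dZ α (dVbar (fun q => ((φ q : ℝ) : ℂ))) p)
    (A : ((Fin m → ℂ) × ℂ) → ℂ)
    (hA : A = fun p => Complex.exp ((φ p : ℂ)) * dVbar aα p) :
    ∀ p ∈ U, dV A p = 0 := by
  set v1 : (Fin m → ℂ) × ℂ := ((0 : Fin m → ℂ), (1 : ℂ)) with hv1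
  set v2 : (Fin m → ℂ) × ℂ := ((0 : Fin m → ℂ), Complex.I) with hv2
  set z1 : (Fin m → ℂ) × ℂ := (Pi.single α 1, (0 : ℂ)) with hz1
  set z2 : (Fin m → ℂ) × ℂ := (Pi.single α Complex.I, (0 : ℂ)) with hz2
  have hdV : ∀ F : ((Fin m → ℂ) × ℂ) → ℂ, dV F = wd (-Complex.I) v1 v2 F := by
    intro F; funext p; simp only [dV, wd, hv1, hv2]; ring
  have hdVb : ∀ F : ((Fin m → ℂ) × ℂ) → ℂ, dVbar F = wd Complex.I v1 v2 F := by
    intro F; funext p; simp only [dVbar, wd, hv1, hv2]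
  have hdZ : ∀ F : ((Fin m → ℂ) × ℂ) → ℂ, dZ α F = wd (-Complex.I) z1 z2 F := by
    intro F; funext p; simp only [dZ, wd, hz1, hz2]; ring
  set Φ : ((Fin m → ℂ) × ℂ) → ℂ := fun q => ((φ q : ℝ) : ℂ) with hΦdef
  have hφ' : ContDiffOn ℝ (⊤ : ℕ∞) φ U := hφ.of_le (by simp)
  have hΦ : ContDiffOn ℝ (⊤ : ℕ∞) Φ U :=
    Complex.ofRealCLM.contDiff.comp_contDiffOn hφ'
  -- derived smooth functions
  have hΦb : ContDiffOn ℝ (⊤ : ℕ∞) (wd Complex.I v1 v2 Φ) U := contDiffOn_wd hU hΦ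
  set G : ((Fin m → ℂ) × ℂ) → ℂ := wd (-Complex.I) z1 z2 (wd Complex.I v1 v2 Φ) with hGdef
  have hG : ContDiffOn ℝ (⊤ : ℕ∞) G U := contDiffOn_wd hU hΦb
  have hDZΦ : ContDiffOn ℝ (⊤ : ℕ∞) (wd (-Complex.I) z1 z2 Φ) U := contDiffOn_wd hU hΦ
  -- the PDE in wd form
  have hyp' : ∀ q ∈ U, wd (-Complex.I) v1 v2 (wd Complex.I v1 v2 Φ) q = Complex.exp (Φ q) := by
    intro q hq
    have := hhyp q hq
    rwa [hdV, hdVb] at this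
  -- Step A : A = (∂v̄Φ)·G − ∂v̄G on U
  have stepA : ∀ q ∈ U, A q = wd Complex.I v1 v2 Φ q * G q - wd Complex.I v1 v2 G q := by
    intro q hq
    have hΦq : DifferentiableAt ℝ Φ q := diffAt_of_smooth hU hΦ hq
    have hGq : DifferentiableAt ℝ G q := diffAt_of_smooth hU hG hq
    have hFq : DifferentiableAt ℝ (fun r => -Complex.exp (-Φ r)) q :=
      (hΦq.neg.cexp).neg
    have haα' : aα = fun r => (fun r => -Complex.exp (-Φ r)) r * G r := by
      rw [haα]; funext r
      simp only [hdZ, hdVb, ← hGdef, hΦdef, Complex.ofReal_neg]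
      rfl
    rw [hA]
    simp only [hdVb, haα']
    rw [wd_mul hFq hGq]
    have h1 : wd Complex.I v1 v2 (fun r => -Complex.exp (-Φ r)) q
        = Complex.exp (-Φ q) * wd Complex.I v1 v2 Φ q := by
      have e1 : (fun r => -Complex.exp (-Φ r)) = fun r => -(fun r => Complex.exp ((fun r => -Φ r) r)) r := rfl
      rw [e1, wd_neg, wd_exp (F := fun r => -Φ r) hΦq.neg]
      have e2 : (fun r => -Φ r) = fun r => -(Φ r) := rfl
      rw [e2, wd_neg]
      ring
    rw [h1]
    have e3 : Complex.exp (Φ q) * Complex.exp (-Φ q) = 1 := by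
      rw [← Complex.exp_add]; simp
    have : Complex.exp ((φ q : ℂ)) = Complex.exp (Φ q) := rfl
    rw [this]
    linear_combination (wd Complex.I v1 v2 Φ q * G q - wd Complex.I v1 v2 G q) * e3
  -- Step B : ∂v G = e^Φ · ∂_α Φ on U
  have stepB : ∀ q ∈ U, wd (-Complex.I) v1 v2 G q
      = Complex.exp (Φ q) * wd (-Complex.I) z1 z2 Φ q := by
    intro q hq
    rw [hGdef, wd_comm hU hΦb hq]
    have hev : (wd (-Complex.I) v1 v2 (wd Complex.I v1 v2 Φ)) =ᶠ[nhds q]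
        (fun r => Complex.exp (Φ r)) :=
      Filter.eventually_of_mem (hU.mem_nhds hq) (fun r hr => hyp' r hr)
    rw [wd_congr hev, wd_exp (diffAt_of_smooth hU hΦ hq)]
  -- Main computation
  intro p hp
  rw [hdV]
  have hevA : A =ᶠ[nhds p]
      (fun q => wd Complex.I v1 v2 Φ q * G q - wd Complex.I v1 v2 G q) :=
    Filter.eventually_of_mem (hU.mem_nhds hp) (fun q hq => stepA q hq)
  rw [wd_congr hevA]
  have hΦp : DifferentiableAt ℝ Φ p := diffAt_of_smooth hU hΦ hp
  have hΦbp : DifferentiableAt ℝ (wd Complex.I v1 v2 Φ) p := diffAt_of_smooth hU hΦb hp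
  have hGp : DifferentiableAt ℝ G p := diffAt_of_smooth hU hG hp
  have hGbp : DifferentiableAt ℝ (wd Complex.I v1 v2 G) p :=
    diffAt_of_smooth hU (contDiffOn_wd hU hG) hp
  rw [wd_sub (F := fun q => wd Complex.I v1 v2 Φ q * G q) (hΦbp.mul hGp) hGbp, wd_mul hΦbp hGp]
  -- ∂v ∂v̄ Φ = e^Φ
  rw [hyp' p hp]
  -- ∂v G
  rw [stepB p hp]
  -- ∂v ∂v̄ G = ∂v̄ ∂v G
  rw [wd_comm hU hG hp]
  have hevG : (wd (-Complex.I) v1 v2 G) =ᶠ[nhds p]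
      (fun r => Complex.exp (Φ r) * wd (-Complex.I) z1 z2 Φ r) :=
    Filter.eventually_of_mem (hU.mem_nhds hp) (fun q hq => stepB q hq)
  rw [wd_congr hevG]
  have hexp : DifferentiableAt ℝ (fun r => Complex.exp (Φ r)) p := hΦp.cexp
  have hDZΦp : DifferentiableAt ℝ (wd (-Complex.I) z1 z2 Φ) p := diffAt_of_smooth hU hDZΦ hp
  rw [wd_mul hexp hDZΦp, wd_exp hΦp]
  -- ∂v̄ ∂α Φ = ∂α ∂v̄ Φ
  rw [wd_comm hU hΦ hp]
  rw [hGdef]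
  ring
end

section
/- Fix 1 ≤ α, β ≤ m. Define c_{αβ̄} := ∂_α ∂_β̄ φ − e^{−φ}·(∂_α ∂_v̄ φ)·(∂_v ∂_β̄ φ) : U → ℂ, and A_α := ∂_v̄(−e^{−φ}·∂_α ∂_v̄ φ), A_β := ∂_v̄(−e^{−φ}·∂_β ∂_v̄ φ). Then at every point of U: −e^{−φ}·∂_v ∂_v̄ c_{αβ̄} + c_{αβ̄} = A_α · conj(A_β). (This is Lemma 1.3(ii) of the paper, due to Schumacher: (□+1)c(φ)_{αβ̄} = A^v_{αv̄} A^{v̄}_{β̄v}, where □ = −φ^{vv̄}∂_v∂_v̄ is the fiberwise Laplacian.) -/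
open Complex

abbrev EE (m : ℕ) := (Fin m → ℂ) × ℂ

section pd
variable {m : ℕ}

/-- directional real derivative -/
noncomputable def pdd {m : ℕ} (w : EE m) (F : EE m → ℂ) (p : EE m) : ℂ := fderiv ℝ F p w

theorem pdd_smoothOn {U : Set (EE m)} (hU : IsOpen U) {F : EE m → ℂ}
    (hF : ContDiffOn ℝ (⊤ : ℕ∞) F U) (w : EE m) : ContDiffOn ℝ (⊤ : ℕ∞) (pdd w F) U := by
  have h1 : ContDiffOn ℝ (⊤ : ℕ∞) (fun x => fderiv ℝ F x) U :=
    hF.fderiv_of_isOpen hU (by exact (by simp))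
  exact (ContinuousLinearMap.apply ℝ ℂ w).contDiff.comp_contDiffOn h1

theorem pdd_congr {U : Set (EE m)} (hU : IsOpen U) {F G : EE m → ℂ}
    (h : ∀ q ∈ U, F q = G q) {p : EE m} (hp : p ∈ U) (w : EE m) :
    pdd w F p = pdd w G p := by
  have : F =ᶠ[nhds p] G := Filter.eventuallyEq_iff_exists_mem.2 ⟨U, hU.mem_nhds hp, h⟩
  unfold pdd
  rw [this.fderiv_eq]

theorem pdd_add {F G : EE m → ℂ} {p : EE m} (hF : DifferentiableAt ℝ F p)
    (hG : DifferentiableAt ℝ G p) (w : EE m) :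
    pdd w (fun q => F q + G q) p = pdd w F p + pdd w G p := by
  unfold pdd; rw [fderiv_fun_add hF hG]; rfl

theorem pdd_mul {F G : EE m → ℂ} {p : EE m} (hF : DifferentiableAt ℝ F p)
    (hG : DifferentiableAt ℝ G p) (w : EE m) :
    pdd w (fun q => F q * G q) p = pdd w F p * G p + F p * pdd w G p := by
  unfold pdd; rw [fderiv_fun_mul hF hG]
  simp only [ContinuousLinearMap.add_apply, ContinuousLinearMap.smul_apply, smul_eq_mul]
  ring

theorem pdd_const_mul {F : EE m → ℂ} {p : EE m} (hF : DifferentiableAt ℝ F p) (a : ℂ) (w : EE m) :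
    pdd w (fun q => a * F q) p = a * pdd w F p := by
  unfold pdd; rw [fderiv_const_mul hF a]; rfl

theorem pdd_neg {F : EE m → ℂ} {p : EE m} (w : EE m) :
    pdd w (fun q => -F q) p = -pdd w F p := by
  unfold pdd; rw [fderiv_fun_neg]; rfl

theorem pdd_exp {F : EE m → ℂ} {p : EE m} (hF : DifferentiableAt ℝ F p) (w : EE m) :
    pdd w (fun q => Complex.exp (F q)) p = Complex.exp (F p) * pdd w F p := by
  unfold pdd
  have h1 : HasFDerivAt Complex.exp
      ((ContinuousLinearMap.restrictScalars ℝ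
        (ContinuousLinearMap.smulRight (1 : ℂ →L[ℂ] ℂ) (Complex.exp (F p))))) (F p) :=
    (Complex.hasDerivAt_exp (F p)).hasFDerivAt.restrictScalars ℝ
  have h2 := (h1.comp p hF.hasFDerivAt).fderiv
  rw [show (fun q => Complex.exp (F q)) = Complex.exp ∘ F from rfl, h2]
  simp [mul_comm]

theorem pdd_conj {F : EE m → ℂ} {p : EE m} (hF : DifferentiableAt ℝ F p) (w : EE m) :
    pdd w (fun q => (starRingEnd ℂ) (F q)) p = (starRingEnd ℂ) (pdd w F p) := by
  unfold pdd
  have h1 : HasFDerivAt (fun z : ℂ => (starRingEnd ℂ) z)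
      (Complex.conjCLE.toContinuousLinearMap) (F p) :=
    Complex.conjCLE.toContinuousLinearMap.hasFDerivAt
  have h2 := (h1.comp p hF.hasFDerivAt).fderiv
  rw [show (fun q => (starRingEnd ℂ) (F q)) = (fun z : ℂ => (starRingEnd ℂ) z) ∘ F from rfl, h2]
  rfl

theorem pdd_symm {U : Set (EE m)} (hU : IsOpen U) {F : EE m → ℂ}
    (hF : ContDiffOn ℝ (⊤ : ℕ∞) F U) {p : EE m} (hp : p ∈ U) (w w' : EE m) :
    pdd w (pdd w' F) p = pdd w' (pdd w F) p := by
  have hat : ContDiffAt ℝ (⊤ : ℕ∞) F p := hF.contDiffAt (hU.mem_nhds hp)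
  have hsym : IsSymmSndFDerivAt ℝ F p := hat.isSymmSndFDerivAt (by rw [minSmoothness_of_isRCLikeNormedField]; exact WithTop.coe_le_coe.mpr le_top)
  have key : ∀ v v' : EE m, pdd v (pdd v' F) p = fderiv ℝ (fderiv ℝ F) p v v' := by
    intro v v'
    unfold pdd
    have hdf : DifferentiableAt ℝ (fderiv ℝ F) p := by
      have : ContDiffAt ℝ 1 (fderiv ℝ F) p := hat.fderiv_right (by exact WithTop.coe_le_coe.mpr le_top)
      exact this.differentiableAt one_ne_zero
    have : fderiv ℝ (fun x => (fderiv ℝ F x) v') p =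
        (ContinuousLinearMap.apply ℝ ℂ v').comp (fderiv ℝ (fderiv ℝ F) p) := by
      have := ((ContinuousLinearMap.apply ℝ ℂ v').hasFDerivAt.comp p hdf.hasFDerivAt).fderiv
      exact this
    rw [this]; rfl
  rw [key w w', key w' w, hsym.eq]
end pd
section wop
variable {m : ℕ}

/-- generic Wirtinger-type operator: (1/2)(∂_a F + e·∂_b F) -/
noncomputable def wop (a b : EE m) (e : ℂ) (F : EE m → ℂ) (p : EE m) : ℂ :=
  (1 / 2 : ℂ) * (pdd a F p + e * pdd b F p)

theorem dAt {U : Set (EE m)} (hU : IsOpen U) {F : EE m → ℂ}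
    (hF : ContDiffOn ℝ (⊤ : ℕ∞) F U) {p : EE m} (hp : p ∈ U) : DifferentiableAt ℝ F p :=
  (hF.contDiffAt (hU.mem_nhds hp)).differentiableAt (by simp)

theorem wop_smoothOn {U : Set (EE m)} (hU : IsOpen U) {F : EE m → ℂ}
    (hF : ContDiffOn ℝ (⊤ : ℕ∞) F U) (a b : EE m) (e : ℂ) :
    ContDiffOn ℝ (⊤ : ℕ∞) (wop a b e F) U := by
  have h1 := pdd_smoothOn hU hF a
  have h2 := pdd_smoothOn hU hF b
  exact (h1.add (h2.const_smul e)).const_smul ((1:ℂ)/2) |>.congr (fun x _ => by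
    simp [wop, smul_eq_mul])

theorem wop_congr {U : Set (EE m)} (hU : IsOpen U) {F G : EE m → ℂ}
    (h : ∀ q ∈ U, F q = G q) {p : EE m} (hp : p ∈ U) (a b : EE m) (e : ℂ) :
    wop a b e F p = wop a b e G p := by
  unfold wop; rw [pdd_congr hU h hp a, pdd_congr hU h hp b]

theorem wop_add {F G : EE m → ℂ} {p : EE m} (hF : DifferentiableAt ℝ F p)
    (hG : DifferentiableAt ℝ G p) (a b : EE m) (e : ℂ) :
    wop a b e (fun q => F q + G q) p = wop a b e F p + wop a b e G p := by
  unfold wop; rw [pdd_add hF hG, pdd_add hF hG]; ring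

theorem wop_sub {F G : EE m → ℂ} {p : EE m} (hF : DifferentiableAt ℝ F p)
    (hG : DifferentiableAt ℝ G p) (a b : EE m) (e : ℂ) :
    wop a b e (fun q => F q - G q) p = wop a b e F p - wop a b e G p := by
  have h1 : pdd a (fun q => F q - G q) p = pdd a F p - pdd a G p := by
    unfold pdd; rw [fderiv_fun_sub hF hG]; rfl
  have h2 : pdd b (fun q => F q - G q) p = pdd b F p - pdd b G p := by
    unfold pdd; rw [fderiv_fun_sub hF hG]; rfl
  unfold wop; rw [h1, h2]; ring

theorem wop_mul {F G : EE m → ℂ} {p : EE m} (hF : DifferentiableAt ℝ F p)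
    (hG : DifferentiableAt ℝ G p) (a b : EE m) (e : ℂ) :
    wop a b e (fun q => F q * G q) p = wop a b e F p * G p + F p * wop a b e G p := by
  unfold wop; rw [pdd_mul hF hG, pdd_mul hF hG]; ring

theorem wop_neg {F : EE m → ℂ} {p : EE m} (a b : EE m) (e : ℂ) :
    wop a b e (fun q => -F q) p = -wop a b e F p := by
  unfold wop; rw [pdd_neg, pdd_neg]; ring

theorem wop_exp {F : EE m → ℂ} {p : EE m} (hF : DifferentiableAt ℝ F p)
    (a b : EE m) (e : ℂ) :
    wop a b e (fun q => Complex.exp (F q)) p = Complex.exp (F p) * wop a b e F p := by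
  unfold wop; rw [pdd_exp hF, pdd_exp hF]; ring

theorem wop_exp_neg {F : EE m → ℂ} {p : EE m} (hF : DifferentiableAt ℝ F p)
    (a b : EE m) (e : ℂ) :
    wop a b e (fun q => Complex.exp (-F q)) p = -(Complex.exp (-F p) * wop a b e F p) := by
  have h := wop_exp (F := fun q => -F q) (p := p) hF.neg a b e
  rw [h, wop_neg]; ring

theorem wop_conj {F : EE m → ℂ} {p : EE m} (hF : DifferentiableAt ℝ F p)
    (a b : EE m) (e : ℂ) :
    (starRingEnd ℂ) (wop a b e F p) =
      wop a b ((starRingEnd ℂ) e) (fun q => (starRingEnd ℂ) (F q)) p := by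
  unfold wop
  rw [map_mul, map_add, map_mul, pdd_conj hF, pdd_conj hF,
    show (starRingEnd ℂ) (1/2 : ℂ) = 1/2 by norm_num [Complex.ext_iff]]

theorem wop_comm {U : Set (EE m)} (hU : IsOpen U) {F : EE m → ℂ}
    (hF : ContDiffOn ℝ (⊤ : ℕ∞) F U) {p : EE m} (hp : p ∈ U) (a b a' b' : EE m) (e e' : ℂ) :
    wop a b e (wop a' b' e' F) p = wop a' b' e' (wop a b e F) p := by
  have da := dAt hU (pdd_smoothOn hU hF a) hp
  have db := dAt hU (pdd_smoothOn hU hF b) hp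
  have da' := dAt hU (pdd_smoothOn hU hF a') hp
  have db' := dAt hU (pdd_smoothOn hU hF b') hp
  have expand : ∀ (x y x' y' : EE m) (ε ε' : ℂ),
      wop x y ε (wop x' y' ε' F) p =
        (1/2 : ℂ) * ((1/2) * (pdd x (pdd x' F) p + ε' * pdd x (pdd y' F) p) +
          ε * ((1/2) * (pdd y (pdd x' F) p + ε' * pdd y (pdd y' F) p))) := by
    intro x y x' y' ε ε'
    have hx' := dAt hU (pdd_smoothOn hU hF x') hp
    have hy' := dAt hU (pdd_smoothOn hU hF y') hp
    have key : ∀ w : EE m, pdd w (fun q => (1/2 : ℂ) * (pdd x' F q + ε' * pdd y' F q)) p =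
        (1/2 : ℂ) * (pdd w (pdd x' F) p + ε' * pdd w (pdd y' F) p) := by
      intro w
      rw [pdd_const_mul (by exact hx'.add (hy'.const_mul ε')) _ w]
      rw [pdd_add hx' (hy'.const_mul ε') w]
      rw [pdd_const_mul hy' ε' w]
    have e1 : wop x y ε (wop x' y' ε' F) p =
        (1/2 : ℂ) * (pdd x (fun q => (1/2 : ℂ) * (pdd x' F q + ε' * pdd y' F q)) p +
          ε * pdd y (fun q => (1/2 : ℂ) * (pdd x' F q + ε' * pdd y' F q)) p) := rfl
    rw [e1, key x, key y]
  rw [expand a b a' b' e e', expand a' b' a b e' e,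
    pdd_symm hU hF hp a a', pdd_symm hU hF hp a b', pdd_symm hU hF hp b a',
    pdd_symm hU hF hp b b']
  ring
end wop
section lemmas
variable {m : ℕ} {U : Set (EE m)} {Φ : EE m → ℂ} {a b : EE m}

/-- differentiated hypothesis -/
theorem L1 (hU : IsOpen U) (hΦ : ContDiffOn ℝ (⊤ : ℕ∞) Φ U)
    (hhyp : ∀ p ∈ U, wop a b (-Complex.I) (wop a b Complex.I Φ) p = Complex.exp (Φ p))
    (x y : EE m) (e : ℂ) : ∀ p ∈ U,
    wop x y e (wop a b (-Complex.I) (wop a b Complex.I Φ)) p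
      = Complex.exp (Φ p) * wop x y e Φ p := by
  intro p hp
  rw [wop_congr hU hhyp hp x y e, wop_exp (dAt hU hΦ hp)]

/-- V (W (B Φ)) = e^Φ · W Φ -/
theorem L3 (hU : IsOpen U) (hΦ : ContDiffOn ℝ (⊤ : ℕ∞) Φ U)
    (hhyp : ∀ p ∈ U, wop a b (-Complex.I) (wop a b Complex.I Φ) p = Complex.exp (Φ p))
    (x y : EE m) (e : ℂ) : ∀ p ∈ U,
    wop a b (-Complex.I) (wop x y e (wop a b Complex.I Φ)) p
      = Complex.exp (Φ p) * wop x y e Φ p := by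
  intro p hp
  rw [wop_comm hU (wop_smoothOn hU hΦ a b Complex.I) hp]
  exact L1 hU hΦ hhyp x y e p hp

/-- V (B (W Φ)) = e^Φ · W Φ -/
theorem L3' (hU : IsOpen U) (hΦ : ContDiffOn ℝ (⊤ : ℕ∞) Φ U)
    (hhyp : ∀ p ∈ U, wop a b (-Complex.I) (wop a b Complex.I Φ) p = Complex.exp (Φ p))
    (x y : EE m) (e : ℂ) : ∀ p ∈ U,
    wop a b (-Complex.I) (wop a b Complex.I (wop x y e Φ)) p
      = Complex.exp (Φ p) * wop x y e Φ p := by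
  intro p hp
  rw [wop_congr hU (fun q hq => wop_comm hU hΦ hq a b x y Complex.I e) hp]
  exact L3 hU hΦ hhyp x y e p hp

/-- B (V (W Φ)) = e^Φ · W Φ -/
theorem L4 (hU : IsOpen U) (hΦ : ContDiffOn ℝ (⊤ : ℕ∞) Φ U)
    (hhyp : ∀ p ∈ U, wop a b (-Complex.I) (wop a b Complex.I Φ) p = Complex.exp (Φ p))
    (x y : EE m) (e : ℂ) : ∀ p ∈ U,
    wop a b Complex.I (wop a b (-Complex.I) (wop x y e Φ)) p
      = Complex.exp (Φ p) * wop x y e Φ p := by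
  intro p hp
  rw [wop_comm hU (wop_smoothOn hU hΦ x y e) hp]
  rw [wop_congr hU (fun q hq => wop_comm hU hΦ hq a b x y Complex.I e) hp]
  exact L3 hU hΦ hhyp x y e p hp

/-- V (B (W₁ (W₂ Φ))) = e^Φ · (W₁Φ · W₂Φ + W₁(W₂Φ)) -/
theorem L7 (hU : IsOpen U) (hΦ : ContDiffOn ℝ (⊤ : ℕ∞) Φ U)
    (hhyp : ∀ p ∈ U, wop a b (-Complex.I) (wop a b Complex.I Φ) p = Complex.exp (Φ p))
    (x1 y1 : EE m) (e1 : ℂ) (x2 y2 : EE m) (e2 : ℂ) : ∀ p ∈ U,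
    wop a b (-Complex.I) (wop a b Complex.I (wop x1 y1 e1 (wop x2 y2 e2 Φ))) p
      = Complex.exp (Φ p) *
        (wop x1 y1 e1 Φ p * wop x2 y2 e2 Φ p + wop x1 y1 e1 (wop x2 y2 e2 Φ) p) := by
  intro p hp
  have hG : ContDiffOn ℝ (⊤ : ℕ∞) (wop x2 y2 e2 Φ) U := wop_smoothOn hU hΦ x2 y2 e2
  -- B (W₁ G) = W₁ (B G) on U, under outer V
  have s1 : wop a b (-Complex.I) (wop a b Complex.I (wop x1 y1 e1 (wop x2 y2 e2 Φ))) p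
      = wop a b (-Complex.I) (wop x1 y1 e1 (wop a b Complex.I (wop x2 y2 e2 Φ))) p :=
    wop_congr hU (fun q hq => wop_comm hU hG hq a b x1 y1 Complex.I e1) hp _ _ _
  -- swap outer V and W₁
  have s2 : wop a b (-Complex.I) (wop x1 y1 e1 (wop a b Complex.I (wop x2 y2 e2 Φ))) p
      = wop x1 y1 e1 (wop a b (-Complex.I) (wop a b Complex.I (wop x2 y2 e2 Φ))) p :=
    wop_comm hU (wop_smoothOn hU hG a b Complex.I) hp _ _ _ _ _ _
  -- V (B G) = e^Φ · G on U  (L3')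
  have s3 : wop x1 y1 e1 (wop a b (-Complex.I) (wop a b Complex.I (wop x2 y2 e2 Φ))) p
      = wop x1 y1 e1 (fun q => Complex.exp (Φ q) * wop x2 y2 e2 Φ q) p :=
    wop_congr hU (fun q hq => L3' hU hΦ hhyp x2 y2 e2 q hq) hp _ _ _
  rw [s1, s2, s3]
  rw [wop_mul (F := fun q => Complex.exp (Φ q)) (G := wop x2 y2 e2 Φ)
    (dAt hU ((Complex.contDiff_exp (𝕜 := ℝ)).comp_contDiffOn hΦ) hp) (dAt hU hG hp)]
  rw [wop_exp (dAt hU hΦ hp)]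
  ring
end lemmas

theorem master {m : ℕ} {U : Set (EE m)} {Φ : EE m → ℂ} (hU : IsOpen U)
    (hΦ : ContDiffOn ℝ (⊤ : ℕ∞) Φ U) (hreal : ∀ q, (starRingEnd ℂ) (Φ q) = Φ q)
    (a b xa xb ya yb : EE m)
    (hhyp : ∀ p ∈ U, wop a b (-Complex.I) (wop a b Complex.I Φ) p = Complex.exp (Φ p)) :
    ∀ p ∈ U,
      -Complex.exp (-Φ p) * wop a b (-Complex.I) (wop a b Complex.I (fun q => wop xa xb (-Complex.I) (wop ya yb Complex.I Φ) q - Complex.exp (-Φ q) * wop xa xb (-Complex.I) (wop a b Complex.I Φ) q * wop a b (-Complex.I) (wop ya yb Complex.I Φ) q)) p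
        + (wop xa xb (-Complex.I) (wop ya yb Complex.I Φ) p - Complex.exp (-Φ p) * wop xa xb (-Complex.I) (wop a b Complex.I Φ) p * wop a b (-Complex.I) (wop ya yb Complex.I Φ) p)
      = wop a b Complex.I (fun r => -Complex.exp (-Φ r) * wop xa xb (-Complex.I) (wop a b Complex.I Φ) r) p * (starRingEnd ℂ) (wop a b Complex.I (fun r => -Complex.exp (-Φ r) * wop ya yb (-Complex.I) (wop a b Complex.I Φ) r) p) := by
  intro p hp
  -- smoothness facts
  have smB : ContDiffOn ℝ (⊤ : ℕ∞) (wop a b Complex.I Φ) U := wop_smoothOn hU hΦ _ _ _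
  have smZb : ContDiffOn ℝ (⊤ : ℕ∞) (wop ya yb Complex.I Φ) U := wop_smoothOn hU hΦ _ _ _
  have smu : ContDiffOn ℝ (⊤ : ℕ∞) (wop xa xb (-Complex.I) (wop a b Complex.I Φ)) U := wop_smoothOn hU smB _ _ _
  have sms : ContDiffOn ℝ (⊤ : ℕ∞) (wop a b (-Complex.I) (wop ya yb Complex.I Φ)) U := wop_smoothOn hU smZb _ _ _
  have smt : ContDiffOn ℝ (⊤ : ℕ∞) (wop xa xb (-Complex.I) (wop ya yb Complex.I Φ)) U := wop_smoothOn hU smZb _ _ _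
  have smE : ContDiffOn ℝ (⊤ : ℕ∞) (fun q => Complex.exp (-Φ q)) U :=
    (Complex.contDiff_exp (𝕜 := ℝ)).comp_contDiffOn hΦ.neg
  have smh : ContDiffOn ℝ (⊤ : ℕ∞) (fun r => -Complex.exp (-Φ r) * wop xa xb (-Complex.I) (wop a b Complex.I Φ) r) U := smE.neg.mul smu
  have sma : ContDiffOn ℝ (⊤ : ℕ∞) (wop a b Complex.I (fun r => -Complex.exp (-Φ r) * wop xa xb (-Complex.I) (wop a b Complex.I Φ) r)) U := wop_smoothOn hU smh _ _ _
  have smBu : ContDiffOn ℝ (⊤ : ℕ∞) (wop a b Complex.I (wop xa xb (-Complex.I) (wop a b Complex.I Φ))) U := wop_smoothOn hU smu _ _ _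
  have smBt : ContDiffOn ℝ (⊤ : ℕ∞) (wop a b Complex.I (wop xa xb (-Complex.I) (wop ya yb Complex.I Φ))) U := wop_smoothOn hU smt _ _ _
  have smub : ContDiffOn ℝ (⊤ : ℕ∞) (wop ya yb (-Complex.I) (wop a b Complex.I Φ)) U := wop_smoothOn hU smB _ _ _
  have smhb : ContDiffOn ℝ (⊤ : ℕ∞) (fun r => -Complex.exp (-Φ r) * wop ya yb (-Complex.I) (wop a b Complex.I Φ) r) U := smE.neg.mul smub
  -- exp cancellation
  have hee : Complex.exp (-Φ p) * Complex.exp (Φ p) = 1 := by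
    rw [← Complex.exp_add]; simp
  -- V u = e^Φ · A Φ
  have hVu : wop a b (-Complex.I) (wop xa xb (-Complex.I) (wop a b Complex.I Φ)) p = Complex.exp (Φ p) * wop xa xb (-Complex.I) Φ p :=
    L3 hU hΦ hhyp xa xb (-Complex.I) p hp
  -- a_α explicit formula on U
  have haA : ∀ q ∈ U, wop a b Complex.I (fun r => -Complex.exp (-Φ r) * wop xa xb (-Complex.I) (wop a b Complex.I Φ) r) q =
      Complex.exp (-Φ q) * wop a b Complex.I Φ q * wop xa xb (-Complex.I) (wop a b Complex.I Φ) q - Complex.exp (-Φ q) * wop a b Complex.I (wop xa xb (-Complex.I) (wop a b Complex.I Φ)) q := by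
    intro q hq
    rw [wop_mul (F := fun r => -Complex.exp (-Φ r)) (G := wop xa xb (-Complex.I) (wop a b Complex.I Φ))
      (dAt hU smE.neg hq) (dAt hU smu hq)]
    rw [wop_neg (F := fun r => Complex.exp (-Φ r)), wop_exp_neg (dAt hU hΦ hq)]
    ring
  -- V a_α = -(V Φ) a_α  on U
  have hVa : wop a b (-Complex.I) (wop a b Complex.I (fun r => -Complex.exp (-Φ r) * wop xa xb (-Complex.I) (wop a b Complex.I Φ) r)) p = -(wop a b (-Complex.I) Φ p) * wop a b Complex.I (fun r => -Complex.exp (-Φ r) * wop xa xb (-Complex.I) (wop a b Complex.I Φ) r) p := by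
    have e1 : wop a b (-Complex.I) (wop a b Complex.I (fun r => -Complex.exp (-Φ r) * wop xa xb (-Complex.I) (wop a b Complex.I Φ) r)) p = wop a b (-Complex.I)
        (fun q => Complex.exp (-Φ q) * wop a b Complex.I Φ q * wop xa xb (-Complex.I) (wop a b Complex.I Φ) q
          - Complex.exp (-Φ q) * wop a b Complex.I (wop xa xb (-Complex.I) (wop a b Complex.I Φ)) q) p :=
      wop_congr hU haA hp _ _ _
    rw [e1]
    rw [wop_sub (dAt hU ((smE.mul smB).mul smu) hp) (dAt hU (smE.mul smBu) hp)]
    rw [wop_mul (F := fun q => Complex.exp (-Φ q) * wop a b Complex.I Φ q) (G := wop xa xb (-Complex.I) (wop a b Complex.I Φ))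
      (dAt hU (smE.mul smB) hp) (dAt hU smu hp)]
    rw [wop_mul (F := fun q => Complex.exp (-Φ q)) (G := wop a b Complex.I Φ)
      (dAt hU smE hp) (dAt hU smB hp)]
    rw [wop_mul (F := fun q => Complex.exp (-Φ q)) (G := wop a b Complex.I (wop xa xb (-Complex.I) (wop a b Complex.I Φ)))
      (dAt hU smE hp) (dAt hU smBu hp)]
    rw [wop_exp_neg (dAt hU hΦ hp)]
    rw [hhyp p hp, hVu]
    rw [L7 hU hΦ hhyp xa xb (-Complex.I) a b Complex.I p hp]
    rw [haA p hp]
    ring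
  -- B c = B t + a_α s - u Zb̄Φ on U
  have hBc : ∀ q ∈ U, wop a b Complex.I (fun q => wop xa xb (-Complex.I) (wop ya yb Complex.I Φ) q - Complex.exp (-Φ q) * wop xa xb (-Complex.I) (wop a b Complex.I Φ) q * wop a b (-Complex.I) (wop ya yb Complex.I Φ) q) q =
      wop a b Complex.I (wop xa xb (-Complex.I) (wop ya yb Complex.I Φ)) q + wop a b Complex.I (fun r => -Complex.exp (-Φ r) * wop xa xb (-Complex.I) (wop a b Complex.I Φ) r) q * wop a b (-Complex.I) (wop ya yb Complex.I Φ) q - wop xa xb (-Complex.I) (wop a b Complex.I Φ) q * wop ya yb Complex.I Φ q := by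
    intro q hq
    have heeq : Complex.exp (-Φ q) * Complex.exp (Φ q) = 1 := by
      rw [← Complex.exp_add]; simp
    have e0 : wop a b Complex.I (fun q => wop xa xb (-Complex.I) (wop ya yb Complex.I Φ) q - Complex.exp (-Φ q) * wop xa xb (-Complex.I) (wop a b Complex.I Φ) q * wop a b (-Complex.I) (wop ya yb Complex.I Φ) q) q = wop a b Complex.I
        (fun r => wop xa xb (-Complex.I) (wop ya yb Complex.I Φ) r + (-Complex.exp (-Φ r) * wop xa xb (-Complex.I) (wop a b Complex.I Φ) r) * wop a b (-Complex.I) (wop ya yb Complex.I Φ) r) q :=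
      wop_congr hU (fun r _ => by ring) hq _ _ _
    rw [e0]
    rw [wop_add (dAt hU smt hq) (dAt hU (smh.mul sms) hq)]
    rw [wop_mul (F := fun r => -Complex.exp (-Φ r) * wop xa xb (-Complex.I) (wop a b Complex.I Φ) r) (G := wop a b (-Complex.I) (wop ya yb Complex.I Φ)) (dAt hU smh hq) (dAt hU sms hq)]
    rw [L4 hU hΦ hhyp ya yb Complex.I q hq]
    linear_combination (-(wop xa xb (-Complex.I) (wop a b Complex.I Φ) q * wop ya yb Complex.I Φ q)) * heeq
  -- conjugate of A_β
  have hABc : (starRingEnd ℂ) (wop a b Complex.I (fun r => -Complex.exp (-Φ r) * wop ya yb (-Complex.I) (wop a b Complex.I Φ) r) p) =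
      Complex.exp (-Φ p) * wop a b (-Complex.I) Φ p * wop a b (-Complex.I) (wop ya yb Complex.I Φ) p
        - Complex.exp (-Φ p) * wop a b (-Complex.I) (wop a b (-Complex.I) (wop ya yb Complex.I Φ)) p := by
    rw [wop_conj (dAt hU smhb hp), Complex.conj_I]
    have hconjh : ∀ q ∈ U, (starRingEnd ℂ) ((fun r => -Complex.exp (-Φ r) * wop ya yb (-Complex.I) (wop a b Complex.I Φ) r) q)
        = -Complex.exp (-Φ q) * wop a b (-Complex.I) (wop ya yb Complex.I Φ) q := by
      intro q hq
      have h1 : (starRingEnd ℂ) (wop ya yb (-Complex.I) (wop a b Complex.I Φ) q) = wop a b (-Complex.I) (wop ya yb Complex.I Φ) q := by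
        rw [wop_conj (dAt hU smB hq), Complex.conj_neg_I]
        have h2 : ∀ r ∈ U, (starRingEnd ℂ) (wop a b Complex.I Φ r) = wop a b (-Complex.I) Φ r := by
          intro r hr
          rw [wop_conj (dAt hU hΦ hr), Complex.conj_I]
          exact wop_congr (isOpen_univ) (fun o _ => hreal o) (Set.mem_univ r) _ _ _
        rw [wop_congr hU h2 hq ya yb Complex.I]
        exact wop_comm hU hΦ hq ya yb a b Complex.I (-Complex.I)
      rw [map_mul, map_neg, ← Complex.exp_conj, map_neg, hreal, h1]
    rw [wop_congr hU hconjh hp a b (-Complex.I)]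
    rw [wop_mul (F := fun r => -Complex.exp (-Φ r)) (G := wop a b (-Complex.I) (wop ya yb Complex.I Φ))
      (dAt hU smE.neg hp) (dAt hU sms hp)]
    rw [wop_neg (F := fun r => Complex.exp (-Φ r)), wop_exp_neg (dAt hU hΦ hp)]
    ring
  -- main assembly
  have e8a : wop a b (-Complex.I) (wop a b Complex.I (fun q => wop xa xb (-Complex.I) (wop ya yb Complex.I Φ) q - Complex.exp (-Φ q) * wop xa xb (-Complex.I) (wop a b Complex.I Φ) q * wop a b (-Complex.I) (wop ya yb Complex.I Φ) q)) p = wop a b (-Complex.I)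
      (fun q => wop a b Complex.I (wop xa xb (-Complex.I) (wop ya yb Complex.I Φ)) q + wop a b Complex.I (fun r => -Complex.exp (-Φ r) * wop xa xb (-Complex.I) (wop a b Complex.I Φ) r) q * wop a b (-Complex.I) (wop ya yb Complex.I Φ) q - wop xa xb (-Complex.I) (wop a b Complex.I Φ) q * wop ya yb Complex.I Φ q) p :=
    wop_congr hU hBc hp _ _ _
  rw [e8a]
  rw [wop_sub (dAt hU (smBt.add (sma.mul sms)) hp) (dAt hU (smu.mul smZb) hp)]
  rw [wop_add (dAt hU smBt hp) (dAt hU (sma.mul sms) hp)]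
  rw [wop_mul (F := wop a b Complex.I (fun r => -Complex.exp (-Φ r) * wop xa xb (-Complex.I) (wop a b Complex.I Φ) r)) (G := wop a b (-Complex.I) (wop ya yb Complex.I Φ)) (dAt hU sma hp) (dAt hU sms hp)]
  rw [wop_mul (F := wop xa xb (-Complex.I) (wop a b Complex.I Φ)) (G := wop ya yb Complex.I Φ) (dAt hU smu hp) (dAt hU smZb hp)]
  rw [L7 hU hΦ hhyp xa xb (-Complex.I) ya yb Complex.I p hp]
  rw [hVa, hVu, hABc]
  linear_combination (-(wop xa xb (-Complex.I) (wop ya yb Complex.I Φ) p)) * hee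

theorem dV_eq {m : ℕ} (F : EE m → ℂ) :
    dV F = wop ((0 : Fin m → ℂ), (1 : ℂ)) ((0 : Fin m → ℂ), Complex.I) (-Complex.I) F := by
  funext p; unfold dV wop pdd; ring

theorem dVbar_eq {m : ℕ} (F : EE m → ℂ) :
    dVbar F = wop ((0 : Fin m → ℂ), (1 : ℂ)) ((0 : Fin m → ℂ), Complex.I) Complex.I F := by
  funext p; unfold dVbar wop pdd; ring

theorem dZ_eq {m : ℕ} (α : Fin m) (F : EE m → ℂ) :
    dZ α F = wop (Pi.single α 1, (0 : ℂ)) (Pi.single α Complex.I, (0 : ℂ)) (-Complex.I) F := by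
  funext p; unfold dZ wop pdd; ring

theorem dZbar_eq {m : ℕ} (α : Fin m) (F : EE m → ℂ) :
    dZbar α F = wop (Pi.single α 1, (0 : ℂ)) (Pi.single α Complex.I, (0 : ℂ)) Complex.I F := by
  funext p; unfold dZbar wop pdd; ring


/-- Lemma 1.3(ii) (Schumacher): (□+1)c(φ)_{αβ̄} = A^v_{αv̄}·conj(A^v_{βv̄}), where
c_{αβ̄} = ∂_α∂_β̄φ − e^{−φ}·(∂_α∂_v̄φ)·(∂_v∂_β̄φ) and □ = −e^{−φ}∂_v∂_v̄. -/
theorem schumacher_box_plus_one {m : ℕ}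
    (U : Set ((Fin m → ℂ) × ℂ)) (hU : IsOpen U)
    (φ : ((Fin m → ℂ) × ℂ) → ℝ) (hφ : ContDiffOn ℝ (⊤ : ℕ∞) φ U)
    (hhyp : ∀ p ∈ U, dV (dVbar (fun q => ((φ q : ℝ) : ℂ))) p = Complex.exp (φ p))
    (α β : Fin m)
    (c Aα Aβ : ((Fin m → ℂ) × ℂ) → ℂ)
    (hc : c = fun p => dZ α (dZbar β (fun q => ((φ q : ℝ) : ℂ))) p -
      Complex.exp (-(φ p)) * dZ α (dVbar (fun q => ((φ q : ℝ) : ℂ))) p *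
        dV (dZbar β (fun q => ((φ q : ℝ) : ℂ))) p)
    (hAα : Aα = dVbar (fun p =>
      -Complex.exp (-(φ p)) * dZ α (dVbar (fun q => ((φ q : ℝ) : ℂ))) p))
    (hAβ : Aβ = dVbar (fun p =>
      -Complex.exp (-(φ p)) * dZ β (dVbar (fun q => ((φ q : ℝ) : ℂ))) p)) :
    ∀ p ∈ U,
      -Complex.exp (-(φ p)) * dV (dVbar c) p + c p = Aα p * (starRingEnd ℂ) (Aβ p) := by
  subst hc hAα hAβ
  have hΦ : ContDiffOn ℝ (⊤ : ℕ∞) (fun q => ((φ q : ℝ) : ℂ)) U :=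
    Complex.ofRealCLM.contDiff.comp_contDiffOn hφ
  have hreal : ∀ q, (starRingEnd ℂ) ((fun q => ((φ q : ℝ) : ℂ)) q) = (fun q => ((φ q : ℝ) : ℂ)) q :=
    fun q => Complex.conj_ofReal _
  have hhyp' : ∀ p ∈ U,
      wop ((0 : Fin m → ℂ), (1 : ℂ)) ((0 : Fin m → ℂ), Complex.I) (-Complex.I)
        (wop ((0 : Fin m → ℂ), (1 : ℂ)) ((0 : Fin m → ℂ), Complex.I) Complex.I
          (fun q => ((φ q : ℝ) : ℂ))) p = Complex.exp ((fun q => ((φ q : ℝ) : ℂ)) p) := by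
    intro p hp
    have h0 := hhyp p hp
    simp only [dV_eq, dVbar_eq] at h0
    exact h0
  have key := master hU hΦ hreal ((0 : Fin m → ℂ), (1 : ℂ)) ((0 : Fin m → ℂ), Complex.I)
    (Pi.single α 1, (0 : ℂ)) (Pi.single α Complex.I, (0 : ℂ))
    (Pi.single β 1, (0 : ℂ)) (Pi.single β Complex.I, (0 : ℂ)) hhyp'
  intro p hp
  have hk := key p hp
  simp only [dV_eq, dVbar_eq, dZ_eq, dZbar_eq, Complex.ofReal_neg]
  convert hk using 3
end
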